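/- Let E be a bounded convex body in ℝ^n containing the closed ball of radius ρ centered at the origin and contained in the ball of radius 6ρ. Then the radial projection map from E \ B(0, ρ) to ∂E, sending x to the unique point of ∂E on the ray from the origin through x, is Lipschitz with Lipschitz constant at most 36. -/

import Mathlib

/-!
Write `x = a p`, `y = b q` with `p = π x`, `q = π y` on `∂E` and `0 < b ≤ a`. Convexity makes every
point of the line through `p` and `q` lying beyond `p` avoid the interior of `E`, hence the
ball `B(0, ρ)`. Completing a square then gives `ρ b ‖p - q‖ ≤ ‖p‖ ‖a p - b q‖`, and
`‖p‖ ≤ 6ρ`, `1 / b ≤ ‖q‖ / ρ ≤ 6` turn this into `‖p - q‖ ≤ 36 ‖x - y‖`.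
-/

open Metric

theorem Convex.add_smul_sub_notMem_interior {𝕜 F : Type*} [Field 𝕜] [LinearOrder 𝕜]
    [IsStrictOrderedRing 𝕜] [AddCommGroup F] [Module 𝕜 F] [TopologicalSpace F]
    [IsTopologicalAddGroup F] [ContinuousConstSMul 𝕜 F] {E : Set F} (hconv : Convex 𝕜 E)
    {p q : F} (hp : p ∈ frontier E) (hq : q ∈ closure E) {t : 𝕜} (ht : t ≤ 0) :
    p + t • (q - p) ∉ interior E := by
  intro hz
  rcases ht.lt_or_eq with ht | rfl
  · refine hp.2 (hconv.openSegment_interior_closure_subset_interior hz hq ?_)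
    have h1t : 0 < 1 - t := by linarith
    refine ⟨1 / (1 - t), -t / (1 - t), by positivity, div_pos (by linarith) h1t,
      by field_simp; ring, ?_⟩
    match_scalars <;> field_simp <;> ring
  · exact hp.2 (by simpa using hz)

theorem mul_norm_le_norm_mul_norm_smul_sub {F : Type*} [NormedAddCommGroup F]
    [InnerProductSpace ℝ F] {ρ : ℝ} (hρ : 0 ≤ ρ) {p v : F}
    (hray : ∀ t : ℝ, t ≤ 0 → ρ ≤ ‖p + t • v‖) {s b : ℝ} (hs : 0 ≤ s) (hb : 0 ≤ b) :
    ρ * b * ‖v‖ ≤ ‖p‖ * ‖s • p - b • v‖ := by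
  set c := inner ℝ p v
  have hexp : ‖s • p - b • v‖ ^ 2 = s ^ 2 * ‖p‖ ^ 2 - 2 * s * b * c + b ^ 2 * ‖v‖ ^ 2 := by
    rw [norm_sub_sq_real, real_inner_smul_left, real_inner_smul_right, norm_smul, norm_smul,
      Real.norm_eq_abs, Real.norm_eq_abs, mul_pow, mul_pow, sq_abs, sq_abs]
    ring
  rw [← pow_le_pow_iff_left₀ (by positivity) (by positivity) two_ne_zero, mul_pow, mul_pow ‖p‖,
    hexp]
  have hp : ρ ≤ ‖p‖ := by simpa using hray 0 le_rfl
  rcases le_or_gt c 0 with hc | hc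
  · have hρp : ρ ^ 2 ≤ ‖p‖ ^ 2 := pow_le_pow_left₀ hρ hp 2
    nlinarith [mul_nonneg (mul_nonneg hs hb) (mul_nonneg (neg_nonneg.2 hc) (sq_nonneg ‖p‖)),
      mul_le_mul_of_nonneg_right hρp (sq_nonneg (b * ‖v‖)), sq_nonneg (s * ‖p‖ ^ 2)]
  · have hv2 : 0 < ‖v‖ ^ 2 := by
      have hv : v ≠ 0 := by rintro rfl; simp [c] at hc
      positivity
    -- `p - (c / ‖v‖²) • v` is the foot of the perpendicular from `0` to the line `p + ℝ v`
    have hfoot : ‖p + (-c / ‖v‖ ^ 2) • v‖ ^ 2 = ‖p‖ ^ 2 - c ^ 2 / ‖v‖ ^ 2 := by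
      rw [norm_add_sq_real, real_inner_smul_right, norm_smul, Real.norm_eq_abs, mul_pow, sq_abs]
      field_simp; ring
    have hgap : ρ ^ 2 * ‖v‖ ^ 2 ≤ ‖p‖ ^ 2 * ‖v‖ ^ 2 - c ^ 2 := by
      have := pow_le_pow_left₀ hρ (hray (-c / ‖v‖ ^ 2)
        (div_nonpos_of_nonpos_of_nonneg (neg_nonpos.2 hc.le) hv2.le)) 2
      rw [hfoot, le_sub_comm, div_le_iff₀ hv2] at this
      linarith
    calc (ρ * b) ^ 2 * ‖v‖ ^ 2 = b ^ 2 * (ρ ^ 2 * ‖v‖ ^ 2) := by ring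
      _ ≤ b ^ 2 * (‖p‖ ^ 2 * ‖v‖ ^ 2 - c ^ 2) := mul_le_mul_of_nonneg_left hgap (sq_nonneg b)
      _ ≤ (s * ‖p‖ ^ 2 - b * c) ^ 2 + b ^ 2 * (‖p‖ ^ 2 * ‖v‖ ^ 2 - c ^ 2) :=
          le_add_of_nonneg_left (sq_nonneg _)
      _ = ‖p‖ ^ 2 * (s ^ 2 * ‖p‖ ^ 2 - 2 * s * b * c + b ^ 2 * ‖v‖ ^ 2) := by ring

section RadialProjection

variable {F : Type*} [NormedAddCommGroup F] [InnerProductSpace ℝ F] {E : Set F} {ρ R : ℝ}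

theorem sq_mul_norm_sub_le_of_mem_frontier (hconv : Convex ℝ E) (hρ : 0 ≤ ρ)
    (hin : ball (0 : F) ρ ⊆ E) (hout : E ⊆ closedBall 0 R) {p q : F} (hp : p ∈ frontier E)
    (hq : q ∈ closure E) {a b : ℝ} (hb : 0 < b) (hba : b ≤ a) (hbq : ρ ≤ ‖b • q‖) :
    ρ ^ 2 * ‖p - q‖ ≤ R ^ 2 * ‖a • p - b • q‖ := by
  have hclosure : closure E ⊆ closedBall 0 R := closure_minimal hout isClosed_closedBall
  have hpR : ‖p‖ ≤ R := mem_closedBall_zero_iff.1 (hclosure (frontier_subset_closure hp))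
  have hqR : ‖q‖ ≤ R := mem_closedBall_zero_iff.1 (hclosure hq)
  have hray : ∀ t : ℝ, t ≤ 0 → ρ ≤ ‖p + t • (q - p)‖ := fun t ht ↦ by
    by_contra! h
    exact hconv.add_smul_sub_notMem_interior hp hq ht
      (interior_maximal hin isOpen_ball (mem_ball_zero_iff.2 h))
  have key := mul_norm_le_norm_mul_norm_smul_sub hρ hray (sub_nonneg.2 hba) hb.le
  have hab : (a - b) • p - b • (q - p) = a • p - b • q := by module
  rw [hab, norm_sub_rev q] at key
  have hρb : ρ ≤ b * R := by
    rw [norm_smul, Real.norm_of_nonneg hb.le] at hbq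
    exact hbq.trans (mul_le_mul_of_nonneg_left hqR hb.le)
  calc ρ ^ 2 * ‖p - q‖ ≤ b * R * (ρ * ‖p - q‖) := by
        rw [sq, mul_assoc]; exact mul_le_mul_of_nonneg_right hρb (by positivity)
    _ = R * (ρ * b * ‖p - q‖) := by ring
    _ ≤ R * (R * ‖a • p - b • q‖) := by
        refine mul_le_mul_of_nonneg_left ?_ ((norm_nonneg q).trans hqR)
        exact key.trans (mul_le_mul_of_nonneg_right hpR (norm_nonneg _))
    _ = R ^ 2 * ‖a • p - b • q‖ := by ring

theorem sq_mul_dist_le_of_radial_frontier (hconv : Convex ℝ E) (hρ : 0 ≤ ρ)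
    (hin : ball (0 : F) ρ ⊆ E) (hout : E ⊆ closedBall 0 R) {π : F → F}
    (hπ : ∀ x ∈ E \ ball 0 ρ, π x ∈ frontier E ∧ ∃ t : ℝ, 0 < t ∧ π x = t • x)
    {x y : F} (hx : x ∈ E \ ball 0 ρ) (hy : y ∈ E \ ball 0 ρ) :
    ρ ^ 2 * dist (π x) (π y) ≤ R ^ 2 * dist x y := by
  obtain ⟨hfx, t, ht, hxt⟩ := hπ x hx
  obtain ⟨hfy, u, hu, hyu⟩ := hπ y hy
  wlog htu : t ≤ u generalizing x y t u
  · rw [dist_comm, dist_comm x]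
    exact this hy hx hfy u hu hyu hfx t ht hxt (le_of_not_ge htu)
  have hx' : t⁻¹ • π x = x := by rw [hxt, inv_smul_smul₀ ht.ne']
  have hy' : u⁻¹ • π y = y := by rw [hyu, inv_smul_smul₀ hu.ne']
  have hyρ : ρ ≤ ‖u⁻¹ • π y‖ := by
    rw [hy']; exact not_lt.1 fun h ↦ hy.2 (mem_ball_zero_iff.2 h)
  have := sq_mul_norm_sub_le_of_mem_frontier hconv hρ hin hout hfx
    (frontier_subset_closure hfy) (inv_pos.2 hu) (inv_anti₀ ht htu) hyρ
  rwa [hx', hy', ← dist_eq_norm, ← dist_eq_norm] at this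

end RadialProjection

theorem stmt5_general (n : ℕ) (ρ : ℝ) (hρ : 0 < ρ) (E : Set (EuclideanSpace ℝ (Fin n)))
    (hconv : Convex ℝ E)
    (hin : Metric.closedBall (0 : EuclideanSpace ℝ (Fin n)) ρ ⊆ E)
    (hout : E ⊆ Metric.ball (0 : EuclideanSpace ℝ (Fin n)) (6 * ρ))
    (π : EuclideanSpace ℝ (Fin n) → EuclideanSpace ℝ (Fin n))
    (hπ : ∀ x ∈ E \ Metric.ball (0 : EuclideanSpace ℝ (Fin n)) ρ,
      π x ∈ frontier E ∧ ∃ t : ℝ, 1 ≤ t ∧ π x = t • x) :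
    LipschitzOnWith 36 π (E \ Metric.ball (0 : EuclideanSpace ℝ (Fin n)) ρ) := by
  have hπ' : ∀ x ∈ E \ ball 0 ρ, π x ∈ frontier E ∧ ∃ t : ℝ, 0 < t ∧ π x = t • x :=
    fun x hx ↦ (hπ x hx).imp_right fun ⟨t, ht, h⟩ ↦ ⟨t, one_pos.trans_le ht, h⟩
  refine LipschitzOnWith.of_dist_le_mul fun x hx y hy ↦ ?_
  have h := sq_mul_dist_le_of_radial_frontier hconv hρ.le (ball_subset_closedBall.trans hin)
    (hout.trans ball_subset_closedBall) hπ' hx hy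
  push_cast
  exact le_of_mul_le_mul_left (h.trans_eq (by ring)) (by positivity)

/-- Radial projection estimate: if `E ⊆ ℝⁿ` is a compact convex body with
`closedBall 0 ρ ⊆ E ⊆ ball 0 (6ρ)`, then the radial projection from `E \ B(0,ρ)` to `∂E`
(sending `x` to the point of `∂E` on the ray from the origin through `x`) is Lipschitz with
constant at most `36`. -/
theorem stmt5 (n : ℕ) (ρ : ℝ) (hρ : 0 < ρ) (E : Set (EuclideanSpace ℝ (Fin n)))
    (hconv : Convex ℝ E) (hcomp : IsCompact E)
    (hin : Metric.closedBall (0 : EuclideanSpace ℝ (Fin n)) ρ ⊆ E)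
    (hout : E ⊆ Metric.ball (0 : EuclideanSpace ℝ (Fin n)) (6 * ρ))
    (π : EuclideanSpace ℝ (Fin n) → EuclideanSpace ℝ (Fin n))
    (hπ : ∀ x ∈ E \ Metric.ball (0 : EuclideanSpace ℝ (Fin n)) ρ,
      π x ∈ frontier E ∧ ∃ t : ℝ, 1 ≤ t ∧ π x = t • x) :
    LipschitzOnWith 36 π (E \ Metric.ball (0 : EuclideanSpace ℝ (Fin n)) ρ) :=
  stmt5_general n ρ hρ E hconv hin hout π hπ
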